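/- arXiv:2307.13946 — 2 statements merged into one kernel-verified Lean document; each statement's English description precedes it below -/
import Mathlib

section
/- Let G be a finite p-group. Then at most one subgroup of G of order p belongs to the Chermak-Delgado lattice CD(G); moreover, if a subgroup N of order p lies in CD(G) then N = Z(G). -/
noncomputable def mCD {G : Type*} [Group G] (H : Subgroup G) : ℕ :=
  Nat.card H * Nat.card (Subgroup.centralizer (H : Set G))

noncomputable def mStar (G : Type*) [Group G] : ℕ :=
  sSup (Set.range fun H : Subgroup G => mCD H)

noncomputable def CD (G : Type*) [Group G] : Set (Subgroup G) :=
  {H | mCD H = mStar G}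

noncomputable def deltaCD (G : Type*) [Group G] : ℕ :=
  Nat.card {H : Subgroup G // H ∉ CD G}

lemma mCD_le_mStar {G : Type*} [Group G] [Finite G] (H : Subgroup G) :
    mCD H ≤ mStar G := by
  have : (Set.range fun H : Subgroup G => mCD H).Finite := Set.finite_range _
  exact le_csSup this.bddAbove ⟨H, rfl⟩

lemma centralizer_sup_center {G : Type*} [Group G] (H : Subgroup G) :
    Subgroup.centralizer ((H ⊔ Subgroup.center G : Subgroup G) : Set G)
      = Subgroup.centralizer (H : Set G) := by
  apply le_antisymm
  · exact Subgroup.centralizer_le (SetLike.coe_subset_coe.mpr le_sup_left)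
  · rw [Subgroup.le_centralizer_iff]
    refine sup_le ?_ (Subgroup.center_le_centralizer _)
    rw [← Subgroup.le_centralizer_iff]

lemma center_le_of_mem_CD {G : Type*} [Group G] [Finite G] (H : Subgroup G)
    (hH : H ∈ CD G) : Subgroup.center G ≤ H := by
  by_contra h
  have hlt : H < H ⊔ Subgroup.center G := left_lt_sup.mpr h
  have hcard : Nat.card H < Nat.card (H ⊔ Subgroup.center G : Subgroup G) := by
    rw [show Nat.card H = (H : Set G).ncard from Nat.card_coe_set_eq _,
      show Nat.card (H ⊔ Subgroup.center G : Subgroup G)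
        = ((H ⊔ Subgroup.center G : Subgroup G) : Set G).ncard from Nat.card_coe_set_eq _]
    exact Set.ncard_lt_ncard (SetLike.coe_ssubset_coe.mpr hlt) (Set.toFinite _)
  have hpos : 0 < Nat.card (Subgroup.centralizer (H : Set G)) := Nat.card_pos
  have : mCD H < mCD (H ⊔ Subgroup.center G) := by
    unfold mCD
    rw [centralizer_sup_center]
    exact (Nat.mul_lt_mul_right hpos).mpr hcard
  have := lt_of_lt_of_le this (mCD_le_mStar _)
  rw [hH] at this
  exact lt_irrefl _ this

theorem stmt3 {p : ℕ} [Fact p.Prime] {G : Type*} [Group G] [Finite G]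
    (hG : IsPGroup p G) :
    {N : Subgroup G | Nat.card N = p ∧ N ∈ CD G}.Subsingleton ∧
      ∀ N : Subgroup G, Nat.card N = p → N ∈ CD G → N = Subgroup.center G := by
  have key : ∀ N : Subgroup G, Nat.card N = p → N ∈ CD G → N = Subgroup.center G := by
    intro N hNp hNCD
    have hle : Subgroup.center G ≤ N := center_le_of_mem_CD N hNCD
    have hp := (Fact.out : p.Prime)
    have hntN : Nontrivial N := Finite.one_lt_card_iff_nontrivial.mp (hNp ▸ hp.one_lt)
    have hntG : Nontrivial G := by
      obtain ⟨x, hx⟩ := exists_ne (1 : N)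
      exact ⟨(x : G), 1, fun h => hx (Subtype.ext (by simpa using h))⟩
    have hntZ : Nontrivial (Subgroup.center G) := hG.center_nontrivial
    have hdvd : Nat.card (Subgroup.center G) ∣ Nat.card N := Subgroup.card_dvd_of_le hle
    rw [hNp] at hdvd
    have hZ1 : Nat.card (Subgroup.center G) ≠ 1 := by
      have := Finite.one_lt_card (α := Subgroup.center G)
      omega
    have hZp : Nat.card (Subgroup.center G) = p :=
      ((Nat.Prime.eq_one_or_self_of_dvd hp _ hdvd).resolve_left hZ1)
    exact (Subgroup.eq_of_le_of_card_ge hle (by rw [hNp, hZp])).symm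
  refine ⟨?_, key⟩
  intro N hN M hM
  rw [key N hN.1 hN.2, key M hM.1 hM.2]
end

section
/- Let G be a nonabelian finite 2-group with δ_CD(G) ≤ 6 and Z(G) ≅ C₂. Then G has no normal subgroup isomorphic to C₄ × C₄. -/
/-! ### Auxiliary material -/

abbrev MyM16 := Multiplicative (ZMod 4 × ZMod 4)

def myOv (x y : ZMod 4) : MyM16 := Multiplicative.ofAdd (x, y)

def myCv : Fin 6 → MyM16 :=
  ![myOv 1 0, myOv 1 2, myOv 0 1, myOv 2 1, myOv 1 1, myOv 1 3]

section Aux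

variable {G : Type*} [Group G] [Finite G]

lemma my_mCD_le_mStar (H : Subgroup G) : mCD H ≤ mStar G := by
  have hfin : (Set.range fun H : Subgroup G => mCD H).Finite := by
    have : Finite (Subgroup G) :=
      Finite.of_injective (fun H : Subgroup G => (H : Set G)) SetLike.coe_injective
    exact Set.finite_range _
  exact le_csSup hfin.bddAbove ⟨H, rfl⟩

lemma my_two_mul_card_le {H : Subgroup G} (h : H ≠ ⊤) :
    2 * Nat.card H ≤ Nat.card G := by
  obtain ⟨k, hk⟩ := Subgroup.card_subgroup_dvd_card H
  have hpos : 0 < Nat.card H := Nat.card_pos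
  have hGpos : 0 < Nat.card G := Nat.card_pos
  have hk1 : k ≠ 1 := by
    rintro rfl
    exact h (Subgroup.eq_top_of_card_eq H (by omega))
  have hk0 : k ≠ 0 := by rintro rfl; omega
  have : 2 ≤ k := by omega
  calc 2 * Nat.card H ≤ Nat.card H * k := by nlinarith
    _ = Nat.card G := hk.symm

lemma my_centralizer_center_eq_top :
    Subgroup.centralizer ((Subgroup.center G : Subgroup G) : Set G) = ⊤ := by
  rw [Subgroup.eq_top_iff']
  intro g
  rw [Subgroup.mem_centralizer_iff]
  intro m hm
  exact (Subgroup.mem_center_iff.mp hm g).symm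

lemma my_mStar_ge (hZ : Nat.card (Subgroup.center G) = 2) :
    2 * Nat.card G ≤ mStar G := by
  have h := my_mCD_le_mStar (Subgroup.center G)
  rwa [mCD, hZ, my_centralizer_center_eq_top, Subgroup.card_top] at h

lemma my_mem_center_of_centralizer_eq_top {g : G}
    (h : Subgroup.centralizer ((Subgroup.zpowers g : Subgroup G) : Set G) = ⊤) :
    g ∈ Subgroup.center G := by
  rw [Subgroup.mem_center_iff]
  intro h'
  have hmem : h' ∈ Subgroup.centralizer ((Subgroup.zpowers g : Subgroup G) : Set G) :=
    h ▸ Subgroup.mem_top h'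
  exact (Subgroup.mem_centralizer_iff.mp hmem g (Subgroup.mem_zpowers g)).symm

lemma my_exists_fin_pow_eq {M : Type*} [Group M] [Finite M] {v x : M} (hv : v ^ 4 = 1)
    (hx : x ∈ Subgroup.zpowers v) : ∃ k : Fin 4, v ^ (k : ℕ) = x := by
  rw [← mem_powers_iff_mem_zpowers] at hx
  obtain ⟨n, hn⟩ := (Submonoid.mem_powers_iff _ _).mp hx
  refine ⟨⟨n % 4, Nat.mod_lt _ (by norm_num)⟩, ?_⟩
  simpa [← pow_eq_pow_mod n hv] using hn

lemma my_orderOf_eq_four {M : Type*} [Group M] [Finite M] {a : M}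
    (h4 : a ^ 4 = 1) (h2 : a ^ 2 ≠ 1) : orderOf a = 4 := by
  have hd : orderOf a ∣ 4 := orderOf_dvd_of_pow_eq_one h4
  have hle : orderOf a ≤ 4 := Nat.le_of_dvd (by norm_num) hd
  have hpos : 0 < orderOf a := orderOf_pos a
  interval_cases h : orderOf a
  · exact absurd (by rw [orderOf_eq_one_iff.mp h]; group) h2
  · exact absurd (h ▸ pow_orderOf_eq_one a) h2
  · exact absurd hd (by norm_num)
  · rfl

lemma my_card_eq_two_unique {H : Subgroup G} (hH : Nat.card H = 2) {x y : G}
    (hx : x ∈ H) (hy : y ∈ H) (hx1 : x ≠ 1) (hy1 : y ≠ 1) : x = y := by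
  classical
  by_contra hne
  have : Fintype H := Fintype.ofFinite _
  have h3 : ({⟨1, H.one_mem⟩, ⟨x, hx⟩, ⟨y, hy⟩} : Finset H).card = 3 := by
    rw [Finset.card_insert_of_notMem (by simp [Subtype.ext_iff, Ne.symm hx1, Ne.symm hy1]),
      Finset.card_insert_of_notMem (by simp [Subtype.ext_iff, hne]),
      Finset.card_singleton]
  have hle := Finset.card_le_univ ({⟨1, H.one_mem⟩, ⟨x, hx⟩, ⟨y, hy⟩} : Finset H)
  rw [h3] at hle
  rw [Nat.card_eq_fintype_card] at hH
  have : Fintype.card H = Finset.univ.card := rfl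
  omega

lemma my_zpowers_ne {φ : MyM16 →* G} (hφ : Function.Injective φ) {a b : MyM16}
    (hb : b ^ 4 = 1) (h : ∀ k : Fin 4, b ^ (k : ℕ) ≠ a) :
    Subgroup.zpowers (φ a) ≠ Subgroup.zpowers (φ b) := by
  intro he
  have hmem : φ a ∈ Subgroup.zpowers (φ b) := he ▸ Subgroup.mem_zpowers (φ a)
  rw [← MonoidHom.map_zpowers, Subgroup.mem_map_iff_mem hφ] at hmem
  obtain ⟨k, hk⟩ := my_exists_fin_pow_eq hb hmem
  exact h k hk

lemma my_card_range (φ : MyM16 →* G) (hφ : Function.Injective φ) :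
    Nat.card φ.range = 16 := by
  have h1 : Nat.card φ.range = Nat.card ((⊤ : Subgroup MyM16).map φ) := by
    rw [← MonoidHom.range_eq_map]
  have h2 : Nat.card ((⊤ : Subgroup MyM16).map φ) = Nat.card (⊤ : Subgroup MyM16) :=
    (Nat.card_congr ((⊤ : Subgroup MyM16).equivMapOfInjective φ hφ).toEquiv).symm
  rw [h1, h2, Subgroup.card_top]
  simp [Nat.card_eq_fintype_card]

/-- The key pair lemma: two commuting-generating order-4 subgroups cannot both be in `CD`. -/
lemma my_core_pair (hZ : Nat.card (Subgroup.center G) = 2)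
    (φ : MyM16 →* G) (hφ : Function.Injective φ) {a b : MyM16}
    (ha : orderOf a = 4) (hb : orderOf b = 4)
    (hab : ∀ x : MyM16, ∃ i j : Fin 4, x = a ^ (i : ℕ) * b ^ (j : ℕ)) :
    ¬ (Subgroup.zpowers (φ a) ∈ CD G ∧ Subgroup.zpowers (φ b) ∈ CD G) := by
  rintro ⟨hA, hB⟩
  set n := Nat.card G with hn
  set CA := Subgroup.centralizer ((Subgroup.zpowers (φ a) : Subgroup G) : Set G) with hCA
  set CB := Subgroup.centralizer ((Subgroup.zpowers (φ b) : Subgroup G) : Set G) with hCB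
  have hoa : orderOf (φ a) = 4 := by rw [orderOf_injective φ hφ, ha]
  have hob : orderOf (φ b) = 4 := by rw [orderOf_injective φ hφ, hb]
  have hka : Nat.card (Subgroup.zpowers (φ a)) = 4 := by rw [Nat.card_zpowers, hoa]
  have hkb : Nat.card (Subgroup.zpowers (φ b)) = 4 := by rw [Nat.card_zpowers, hob]
  -- centralizers are proper
  have hCAt : CA ≠ ⊤ := by
    intro ht
    have hc := my_mem_center_of_centralizer_eq_top (G := G) (g := φ a) ht
    have hle := Subgroup.card_le_of_le (Subgroup.zpowers_le.mpr hc)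
    rw [hka, hZ] at hle; omega
  have hCBt : CB ≠ ⊤ := by
    intro ht
    have hc := my_mem_center_of_centralizer_eq_top (G := G) (g := φ b) ht
    have hle := Subgroup.card_le_of_le (Subgroup.zpowers_le.mpr hc)
    rw [hkb, hZ] at hle; omega
  have hCAle : 2 * Nat.card CA ≤ n := my_two_mul_card_le hCAt
  have hCBle : 2 * Nat.card CB ≤ n := my_two_mul_card_le hCBt
  have hmA : mCD (Subgroup.zpowers (φ a)) = 4 * Nat.card CA := by rw [mCD, hka, ← hCA]
  have hmB : mCD (Subgroup.zpowers (φ b)) = 4 * Nat.card CB := by rw [mCD, hkb, ← hCB]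
  have hstar : 2 * n ≤ mStar G := my_mStar_ge hZ
  have hAeq : 4 * Nat.card CA = mStar G := by rw [← hmA]; exact hA
  have hBeq : 4 * Nat.card CB = mStar G := by rw [← hmB]; exact hB
  -- so mStar = 2n and card CA = card CB = n/2
  have h2A : 2 * Nat.card CA = n := by omega
  have h2B : 2 * Nat.card CB = n := by omega
  have hCApos : 0 < Nat.card CA := Nat.card_pos
  have hCBpos : 0 < Nat.card CB := Nat.card_pos
  have hidxA : CA.index = 2 := by
    have hmul := Subgroup.card_mul_index CA
    rw [← hn] at hmul
    have : Nat.card CA * CA.index = Nat.card CA * 2 := by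
      rw [hmul, ← h2A]; ring
    exact Nat.eq_of_mul_eq_mul_left hCApos this
  have hidxB : CB.index = 2 := by
    have hmul := Subgroup.card_mul_index CB
    rw [← hn] at hmul
    have : Nat.card CB * CB.index = Nat.card CB * 2 := by
      rw [hmul, ← h2B]; ring
    exact Nat.eq_of_mul_eq_mul_left hCBpos this
  have hinf : (CA ⊓ CB).index ≤ 4 := by
    have := Subgroup.index_inf_le (H := CA) (K := CB)
    rw [hidxA, hidxB] at this; omega
  -- the intersection centralizes the whole range of φ
  have hsub : CA ⊓ CB ≤ Subgroup.centralizer ((φ.range : Subgroup G) : Set G) := by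
    intro g hg
    rw [Subgroup.mem_centralizer_iff]
    rintro m ⟨x, rfl⟩
    have hga : Commute (φ a) g :=
      Subgroup.mem_centralizer_iff.mp hg.1 (φ a) (Subgroup.mem_zpowers _)
    have hgb : Commute (φ b) g :=
      Subgroup.mem_centralizer_iff.mp hg.2 (φ b) (Subgroup.mem_zpowers _)
    obtain ⟨i, j, hij⟩ := hab x
    have : φ x = (φ a) ^ (i : ℕ) * (φ b) ^ (j : ℕ) := by
      rw [hij, map_mul, map_pow, map_pow]
    rw [this]
    exact ((hga.pow_left _).mul_left (hgb.pow_left _))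
  set CN := Subgroup.centralizer ((φ.range : Subgroup G) : Set G) with hCN
  have hCNpos : 0 < Nat.card CN := Nat.card_pos
  -- upper bound : mCD of the range ≤ mStar = 2n
  have hrange : mCD φ.range = 16 * Nat.card CN := by
    rw [mCD, my_card_range φ hφ, ← hCN]
  have hup : 16 * Nat.card CN ≤ 2 * n := by
    have := my_mCD_le_mStar (G := G) φ.range
    rw [hrange] at this
    omega
  -- lower bound : n ≤ 4 * card CN
  have hlow : n ≤ 4 * Nat.card CN := by
    have hmul := Subgroup.card_mul_index (CA ⊓ CB)
    have hle : Nat.card (CA ⊓ CB : Subgroup G) ≤ Nat.card CN :=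
      Subgroup.card_le_of_le hsub
    calc n = Nat.card (CA ⊓ CB : Subgroup G) * (CA ⊓ CB).index := by rw [hmul, hn]
      _ ≤ Nat.card (CA ⊓ CB : Subgroup G) * 4 := by
          exact Nat.mul_le_mul_left _ hinf
      _ ≤ Nat.card CN * 4 := by exact Nat.mul_le_mul_right _ hle
      _ = 4 * Nat.card CN := by ring
  omega

lemma my_ne_of_card_ne {H K : Subgroup G} (h : Nat.card H ≠ Nat.card K) : H ≠ K := by
  intro he; exact h (by rw [he])

/-- If we can find 7 pairwise distinct subgroups outside `CD G`, then `deltaCD G ≥ 7`. -/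
lemma my_seven (Z1 Z2 A B C D : Subgroup G)
    (cZ1 : Nat.card Z1 = 2) (cZ2 : Nat.card Z2 = 2)
    (cA : Nat.card A = 4) (cB : Nat.card B = 4) (cC : Nat.card C = 4) (cD : Nat.card D = 4)
    (hZ12 : Z1 ≠ Z2) (hAB : A ≠ B) (hAC : A ≠ C) (hAD : A ≠ D)
    (hBC : B ≠ C) (hBD : B ≠ D) (hCD2 : C ≠ D)
    (nb : ⊥ ∉ CD G) (n1 : Z1 ∉ CD G) (n2 : Z2 ∉ CD G)
    (nA : A ∉ CD G) (nB : B ∉ CD G) (nC : C ∉ CD G) (nD : D ∉ CD G) :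
    7 ≤ deltaCD G := by
  classical
  have hbZ1 : (⊥ : Subgroup G) ≠ Z1 := my_ne_of_card_ne (by rw [Subgroup.card_bot, cZ1]; omega)
  have hbZ2 : (⊥ : Subgroup G) ≠ Z2 := my_ne_of_card_ne (by rw [Subgroup.card_bot, cZ2]; omega)
  have hbA : (⊥ : Subgroup G) ≠ A := my_ne_of_card_ne (by rw [Subgroup.card_bot, cA]; omega)
  have hbB : (⊥ : Subgroup G) ≠ B := my_ne_of_card_ne (by rw [Subgroup.card_bot, cB]; omega)
  have hbC : (⊥ : Subgroup G) ≠ C := my_ne_of_card_ne (by rw [Subgroup.card_bot, cC]; omega)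
  have hbD : (⊥ : Subgroup G) ≠ D := my_ne_of_card_ne (by rw [Subgroup.card_bot, cD]; omega)
  have h1A : Z1 ≠ A := my_ne_of_card_ne (by rw [cZ1, cA]; omega)
  have h1B : Z1 ≠ B := my_ne_of_card_ne (by rw [cZ1, cB]; omega)
  have h1C : Z1 ≠ C := my_ne_of_card_ne (by rw [cZ1, cC]; omega)
  have h1D : Z1 ≠ D := my_ne_of_card_ne (by rw [cZ1, cD]; omega)
  have h2A : Z2 ≠ A := my_ne_of_card_ne (by rw [cZ2, cA]; omega)
  have h2B : Z2 ≠ B := my_ne_of_card_ne (by rw [cZ2, cB]; omega)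
  have h2C : Z2 ≠ C := my_ne_of_card_ne (by rw [cZ2, cC]; omega)
  have h2D : Z2 ≠ D := my_ne_of_card_ne (by rw [cZ2, cD]; omega)
  have hfin : Finite (Subgroup G) :=
    Finite.of_injective (fun H : Subgroup G => (H : Set G)) SetLike.coe_injective
  have : Fintype {H : Subgroup G // H ∉ CD G} := Fintype.ofFinite _
  set s : Finset {H : Subgroup G // H ∉ CD G} :=
    {⟨⊥, nb⟩, ⟨Z1, n1⟩, ⟨Z2, n2⟩, ⟨A, nA⟩, ⟨B, nB⟩, ⟨C, nC⟩, ⟨D, nD⟩} with hs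
  have h7 : s.card = 7 := by
    rw [hs,
      Finset.card_insert_of_notMem
        (by simp [Subtype.ext_iff, hbZ1, hbZ2, hbA, hbB, hbC, hbD]),
      Finset.card_insert_of_notMem (by simp [Subtype.ext_iff, hZ12, h1A, h1B, h1C, h1D]),
      Finset.card_insert_of_notMem (by simp [Subtype.ext_iff, h2A, h2B, h2C, h2D]),
      Finset.card_insert_of_notMem (by simp [Subtype.ext_iff, hAB, hAC, hAD]),
      Finset.card_insert_of_notMem (by simp [Subtype.ext_iff, hBC, hBD]),
      Finset.card_insert_of_notMem (by simp [Subtype.ext_iff, hCD2]),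
      Finset.card_singleton]
  have hle := Finset.card_le_univ s
  have huniv : Finset.univ.card = Fintype.card {H : Subgroup G // H ∉ CD G} := rfl
  unfold deltaCD
  rw [Nat.card_eq_fintype_card]
  omega

end Aux

theorem stmt15 {G : Type*} [Group G] [Finite G] (hG : IsPGroup 2 G)
    (hna : ¬ ∀ a b : G, a * b = b * a) (h : deltaCD G ≤ 6)
    (hZ : Nat.card (Subgroup.center G) = 2) :
    ¬ ∃ N : Subgroup G, N.Normal ∧
        Nonempty (N ≃* Multiplicative (ZMod 4 × ZMod 4)) := by
  rintro ⟨N, -, ⟨e⟩⟩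
  classical
  set φ : MyM16 →* G := N.subtype.comp e.symm.toMonoidHom with hφdef
  have hφ : Function.Injective φ := N.subtype_injective.comp e.symm.injective
  have hnpos : 0 < Nat.card G := Nat.card_pos
  have hstar : 2 * Nat.card G ≤ mStar G := my_mStar_ge hZ
  -- ⊥ is not in CD
  have hbot : (⊥ : Subgroup G) ∉ CD G := by
    intro hc
    have hcent : Subgroup.centralizer (((⊥ : Subgroup G) : Subgroup G) : Set G) = ⊤ := by
      rw [Subgroup.eq_top_iff']
      intro g
      rw [Subgroup.mem_centralizer_iff]
      intro m hm
      have : m = 1 := by simpa using hm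
      subst this; simp
    have : mCD (⊥ : Subgroup G) = Nat.card G := by
      rw [mCD, Subgroup.card_bot, hcent, Subgroup.card_top, one_mul]
    rw [CD, Set.mem_setOf_eq, this] at hc
    omega
  -- order 2 non-central subgroups are not in CD
  have hZnot : ∀ w : MyM16, w ^ 2 = 1 → w ≠ 1 → φ w ∉ Subgroup.center G →
      Subgroup.zpowers (φ w) ∉ CD G := by
    intro w hw2 hw1 hwnc hc
    have hw1' : φ w ≠ 1 := by
      intro hh; exact hw1 (hφ (by rwa [map_one]))
    have hord : orderOf (φ w) = 2 := by
      have : (φ w) ^ 2 = 1 := by rw [← map_pow, hw2, map_one]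
      exact orderOf_eq_prime this hw1'
    have hcard : Nat.card (Subgroup.zpowers (φ w)) = 2 := by rw [Nat.card_zpowers, hord]
    have hprop : Subgroup.centralizer ((Subgroup.zpowers (φ w) : Subgroup G) : Set G) ≠ ⊤ := by
      intro ht
      exact hwnc (my_mem_center_of_centralizer_eq_top ht)
    have hle := my_two_mul_card_le hprop
    have : mCD (Subgroup.zpowers (φ w)) =
        2 * Nat.card (Subgroup.centralizer ((Subgroup.zpowers (φ w) : Subgroup G) : Set G)) := by
      rw [mCD, hcard]
    rw [CD, Set.mem_setOf_eq, this] at hc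
    omega
  -- order-2 subgroup cards
  have hZcard : ∀ w : MyM16, w ^ 2 = 1 → w ≠ 1 →
      Nat.card (Subgroup.zpowers (φ w)) = 2 := by
    intro w hw2 hw1
    have hw1' : φ w ≠ 1 := fun hh => hw1 (hφ (by rwa [map_one]))
    have : (φ w) ^ 2 = 1 := by rw [← map_pow, hw2, map_one]
    rw [Nat.card_zpowers, orderOf_eq_prime this hw1']
  -- choose two non-central involutions among the three
  have hunique : ∀ u v : MyM16, u ≠ v → u ≠ 1 → v ≠ 1 →
      ¬ (φ u ∈ Subgroup.center G ∧ φ v ∈ Subgroup.center G) := by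
    rintro u v huv hu1 hv1 ⟨hcu, hcv⟩
    have hu1' : φ u ≠ 1 := fun hh => hu1 (hφ (by rwa [map_one]))
    have hv1' : φ v ≠ 1 := fun hh => hv1 (hφ (by rwa [map_one]))
    exact huv (hφ (my_card_eq_two_unique hZ hcu hcv hu1' hv1'))
  obtain ⟨u, v, hu2, hv2, hu1, hv1, huv, hunc, hvnc⟩ :
      ∃ u v : MyM16, u ^ 2 = 1 ∧ v ^ 2 = 1 ∧ u ≠ 1 ∧ v ≠ 1 ∧ u ≠ v ∧
        φ u ∉ Subgroup.center G ∧ φ v ∉ Subgroup.center G := by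
    by_cases h1 : φ (myOv 2 0) ∈ Subgroup.center G
    · refine ⟨myOv 0 2, myOv 2 2, by decide, by decide, by decide, by decide, by decide, ?_, ?_⟩
      · intro hc; exact hunique _ _ (by decide) (by decide) (by decide) ⟨h1, hc⟩
      · intro hc; exact hunique _ _ (by decide) (by decide) (by decide) ⟨h1, hc⟩
    · by_cases h2 : φ (myOv 0 2) ∈ Subgroup.center G
      · refine ⟨myOv 2 0, myOv 2 2, by decide, by decide, by decide, by decide, by decide,
          h1, ?_⟩
        intro hc; exact hunique _ _ (by decide) (by decide) (by decide) ⟨h2, hc⟩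
      · exact ⟨myOv 2 0, myOv 0 2, by decide, by decide, by decide, by decide, by decide,
          h1, h2⟩
  -- the six cyclic order-4 subgroups
  set K : Fin 6 → Subgroup G := fun i => Subgroup.zpowers (φ (myCv i)) with hK
  have hcv4 : ∀ p : Fin 6, (myCv p) ^ 4 = 1 ∧ (myCv p) ^ 2 ≠ 1 := by decide
  have hKord : ∀ p : Fin 6, orderOf (myCv p) = 4 := fun p =>
    my_orderOf_eq_four (hcv4 p).1 (hcv4 p).2
  have hKcard : ∀ p : Fin 6, Nat.card (K p) = 4 := by
    intro p
    simp only [hK]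
    rw [Nat.card_zpowers, orderOf_injective φ hφ, hKord]
  have hKne : ∀ p q : Fin 6, p ≠ q → K p ≠ K q := by
    have hdec : ∀ p q : Fin 6, p ≠ q → ∀ k : Fin 4, (myCv q) ^ (k : ℕ) ≠ myCv p := by decide
    intro p q hpq
    exact my_zpowers_ne hφ (hcv4 q).1 (hdec p q hpq)
  -- the core pair fact for cyclic subgroups in different blocks
  have hgen : ∀ p q : Fin 6, (p : ℕ) / 2 ≠ (q : ℕ) / 2 →
      ∀ x : MyM16, ∃ i j : Fin 4, x = (myCv p) ^ (i : ℕ) * (myCv q) ^ (j : ℕ) := by decide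
  have hpair : ∀ p q : Fin 6, (p : ℕ) / 2 ≠ (q : ℕ) / 2 →
      ¬ (K p ∈ CD G ∧ K q ∈ CD G) := by
    intro p q hpq
    exact my_core_pair hZ φ hφ (hKord p) (hKord q) (hgen p q hpq)
  -- the two order-2 subgroups
  set Z1 := Subgroup.zpowers (φ u) with hZ1
  set Z2 := Subgroup.zpowers (φ v) with hZ2
  have hZ1not : Z1 ∉ CD G := hZnot u hu2 hu1 hunc
  have hZ2not : Z2 ∉ CD G := hZnot v hv2 hv1 hvnc
  have hZ1card : Nat.card Z1 = 2 := hZcard u hu2 hu1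
  have hZ2card : Nat.card Z2 = 2 := hZcard v hv2 hv1
  have hZ12 : Z1 ≠ Z2 := by
    have hv4 : v ^ 4 = 1 := by
      have h22 := pow_mul v 2 2
      norm_num at h22
      rw [h22, hv2, one_pow]
    refine my_zpowers_ne hφ hv4 ?_
    intro k hk
    rw [pow_eq_pow_mod (k : ℕ) hv2] at hk
    rcases Nat.mod_two_eq_zero_or_one (k : ℕ) with h' | h' <;> rw [h'] at hk
    · exact hu1 (by simpa using hk.symm)
    · exact huv (by simpa using hk.symm)
  -- main case analysis
  have hfin : ∀ A B C D : Fin 6, A ≠ B → A ≠ C → A ≠ D → B ≠ C → B ≠ D → C ≠ D →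
      K A ∉ CD G → K B ∉ CD G → K C ∉ CD G → K D ∉ CD G → False := by
    intro A B C D h1 h2 h3 h4 h5 h6 n1 n2 n3 n4
    have := my_seven Z1 Z2 (K A) (K B) (K C) (K D) hZ1card hZ2card
      (hKcard A) (hKcard B) (hKcard C) (hKcard D) hZ12
      (hKne A B h1) (hKne A C h2) (hKne A D h3) (hKne B C h4) (hKne B D h5) (hKne C D h6)
      hbot hZ1not hZ2not n1 n2 n3 n4
    omega
  by_cases q1 : K 0 ∈ CD G
  · exact hfin 2 3 4 5 (by decide) (by decide) (by decide) (by decide) (by decide) (by decide)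
      (fun hc => hpair 0 2 (by decide) ⟨q1, hc⟩) (fun hc => hpair 0 3 (by decide) ⟨q1, hc⟩)
      (fun hc => hpair 0 4 (by decide) ⟨q1, hc⟩) (fun hc => hpair 0 5 (by decide) ⟨q1, hc⟩)
  by_cases q2 : K 1 ∈ CD G
  · exact hfin 2 3 4 5 (by decide) (by decide) (by decide) (by decide) (by decide) (by decide)
      (fun hc => hpair 1 2 (by decide) ⟨q2, hc⟩) (fun hc => hpair 1 3 (by decide) ⟨q2, hc⟩)
      (fun hc => hpair 1 4 (by decide) ⟨q2, hc⟩) (fun hc => hpair 1 5 (by decide) ⟨q2, hc⟩)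
  by_cases q3 : K 2 ∈ CD G
  · exact hfin 0 1 4 5 (by decide) (by decide) (by decide) (by decide) (by decide) (by decide)
      q1 q2 (fun hc => hpair 2 4 (by decide) ⟨q3, hc⟩) (fun hc => hpair 2 5 (by decide) ⟨q3, hc⟩)
  by_cases q4 : K 3 ∈ CD G
  · exact hfin 0 1 4 5 (by decide) (by decide) (by decide) (by decide) (by decide) (by decide)
      q1 q2 (fun hc => hpair 3 4 (by decide) ⟨q4, hc⟩) (fun hc => hpair 3 5 (by decide) ⟨q4, hc⟩)
  · exact hfin 0 1 2 3 (by decide) (by decide) (by decide) (by decide) (by decide) (by decide)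
      q1 q2 q3 q4
end
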